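/- arXiv:1701.02859 — 2 statements merged into one kernel-verified Lean document; each statement's English description precedes it below -/
import Mathlib

section
/- For any tree T, the total ve-degree of T equals the first Zagreb index M₁(T). -/
/-! In a triangle-free graph the sets of edges incident to the different neighbours `u` of `v`
are pairwise disjoint, and together they cover every edge meeting `N[v]`; hence the ve-degree of `v`
is `∑_{u ~ v} deg u`. Summing over `v`, each vertex `u` is counted once for each of its `deg u`
neighbours, which gives `∑_u (deg u)²`. Trees are acyclic, hence triangle-free. -/

open scoped Classical
open Finset SimpleGraph

/-- ve-degree of a vertex: number of edges incident to at least one vertex of N[v]. -/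
noncomputable def veDeg {V : Type*} [Fintype V] (G : SimpleGraph V) (v : V) : ℕ :=
  (G.edgeFinset.filter (fun e => ∃ u ∈ insert v (G.neighborFinset v), u ∈ e)).card

/-- ev-degree of an edge s(u,v): |N[u] ∪ N[v]|. -/
noncomputable def evDeg {V : Type*} [Fintype V] (G : SimpleGraph V) : Sym2 V → ℕ :=
  Sym2.lift ⟨fun u v =>
      ((insert u (G.neighborFinset u)) ∪ (insert v (G.neighborFinset v))).card,
    fun u v => congrArg Finset.card (Finset.union_comm _ _)⟩

/-- ev-degree Zagreb index S(G). -/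
noncomputable def evZagreb {V : Type*} [Fintype V] (G : SimpleGraph V) : ℕ :=
  ∑ e ∈ G.edgeFinset, (evDeg G e) ^ 2

/-- first ve-degree Zagreb alpha index S^α(G). -/
noncomputable def veAlpha {V : Type*} [Fintype V] (G : SimpleGraph V) : ℕ :=
  ∑ v, (veDeg G v) ^ 2

/-- first ve-degree Zagreb beta index S^β(G). -/
noncomputable def veBeta {V : Type*} [Fintype V] (G : SimpleGraph V) : ℕ :=
  ∑ e ∈ G.edgeFinset,
    Sym2.lift ⟨fun u v => veDeg G u + veDeg G v, fun u v => Nat.add_comm _ _⟩ e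

/-- second ve-degree Zagreb index S^μ(G). -/
noncomputable def veMu {V : Type*} [Fintype V] (G : SimpleGraph V) : ℕ :=
  ∑ e ∈ G.edgeFinset,
    Sym2.lift ⟨fun u v => veDeg G u * veDeg G v, fun u v => Nat.mul_comm _ _⟩ e

/-- second Zagreb index M₂(G). -/
noncomputable def zagreb2 {V : Type*} [Fintype V] (G : SimpleGraph V) : ℕ :=
  ∑ e ∈ G.edgeFinset,
    Sym2.lift ⟨fun u v => G.degree u * G.degree v, fun u v => Nat.mul_comm _ _⟩ e

/-- forgotten topological index F(G). -/
noncomputable def forgotten {V : Type*} [Fintype V] (G : SimpleGraph V) : ℕ :=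
  ∑ e ∈ G.edgeFinset,
    Sym2.lift ⟨fun u v => G.degree u ^ 2 + G.degree v ^ 2, fun u v => Nat.add_comm _ _⟩ e

/-- the star graph K_{1,n-1} on `Fin n`, with center 0. -/
def starGraph (n : ℕ) : SimpleGraph (Fin n) where
  Adj a b := a ≠ b ∧ (a.val = 0 ∨ b.val = 0)
  symm := ⟨fun a b h => ⟨h.1.symm, h.2.symm⟩⟩
  loopless := ⟨fun a h => h.1 rfl⟩

namespace SimpleGraph

variable {V : Type*} {G : SimpleGraph V}

theorem IsAcyclic.cliqueFree_three (hG : G.IsAcyclic) : G.CliqueFree 3 := fun s hs => by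
  obtain ⟨_, w, hw, -⟩ := is3Clique_iff_exists_cycle_length_three.1 ⟨s, hs⟩
  exact hG w hw

variable [Fintype V]

theorem veDeg_eq_card_biUnion_incidenceFinset (v : V) :
    veDeg G v = #((G.neighborFinset v).biUnion fun u => G.incidenceFinset u) := by
  rw [veDeg]
  congr 1
  ext e
  simp only [mem_filter, mem_biUnion, mem_insert, mem_neighborFinset, mem_incidenceFinset,
    incidenceSet, Set.mem_ofPred_eq, mem_edgeFinset]
  constructor
  · rintro ⟨he, w, rfl | hw, hwe⟩
    · induction e using Sym2.inductionOn with
      | hf a b =>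
        rcases Sym2.mem_iff.1 hwe with rfl | rfl
        · exact ⟨b, he, he, Sym2.mem_mk_right _ _⟩
        · exact ⟨a, he.symm, he, Sym2.mem_mk_left _ _⟩
    · exact ⟨w, hw, he, hwe⟩
  · rintro ⟨u, hu, he, hue⟩
    exact ⟨he, u, Or.inr hu, hue⟩

theorem veDeg_eq_sum_degree_of_cliqueFree_three (hG : G.CliqueFree 3) (v : V) :
    veDeg G v = ∑ u ∈ G.neighborFinset v, G.degree u := by
  rw [veDeg_eq_card_biUnion_incidenceFinset, card_biUnion]
  · exact sum_congr rfl fun u _ => G.card_incidenceFinset_eq_degree u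
  · intro a ha b hb hab
    rw [coe_neighborFinset] at ha hb
    refine Finset.disjoint_left.2 fun e hea heb => ?_
    rw [mem_incidenceFinset] at hea heb
    exact G.isIndepSet_neighborSet_of_triangleFree hG v ha hb hab
      (G.adj_of_mem_incidenceSet hab hea heb)

theorem sum_sum_neighborFinset {M : Type*} [AddCommMonoid M] (f : V → M) :
    ∑ v, ∑ u ∈ G.neighborFinset v, f u = ∑ u, G.degree u • f u := by
  rw [sum_comm' (s' := fun u => G.neighborFinset u) (t' := univ) (by simp [G.adj_comm])]
  simp_rw [sum_const, card_neighborFinset_eq_degree]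

end SimpleGraph

theorem total_ve_eq_zagreb1_of_tree {V : Type*} [Fintype V] (G : SimpleGraph V)
    (hT : G.IsTree) :
    ∑ v, veDeg G v = ∑ v, (G.degree v) ^ 2 := by
  simp_rw [veDeg_eq_sum_degree_of_cliqueFree_three hT.isAcyclic.cliqueFree_three,
    sum_sum_neighborFinset, smul_eq_mul, sq]
end

section
/- Let T be a tree on n ≥ 5 vertices. Then S^μ(T) ≤ (n−1)³, with equality if and only if T is a star, where S^μ(T) = Σ_{uv∈E(T)} c_u·c_v is the second ve-degree Zagreb index. -/
open scoped Classical
open Finset SimpleGraph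

/-!
Every ve-degree counts a set of edges, so it is at most `|E| = n - 1`, and each of the `n - 1`
summands of `S^μ` is at most `(n - 1)²`. Equality forces `c_v = |E|`, i.e. every edge meets the
closed neighbourhood of `v`, at every non-isolated vertex `v`. At a leaf `v` with neighbour `p`
that closed neighbourhood is `{v, p}`, and the only edge through `v` contains `p`; so `p` lies on
every edge and the tree is the star centred at `p`. Conversely, in a star every closed
neighbourhood contains the centre.
-/

theorem Nat.mul_eq_mul_self_iff_of_le {a b m : ℕ} (ha : a ≤ m) (hb : b ≤ m) :
    a * b = m * m ↔ a = m ∧ b = m := by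
  refine ⟨fun h ↦ ⟨?_, ?_⟩, by rintro ⟨rfl, rfl⟩; rfl⟩ <;> nlinarith

section VeDegree

variable {V : Type*} [Fintype V] {G : SimpleGraph V}

theorem veDeg_le_card_edgeFinset (G : SimpleGraph V) (v : V) : veDeg G v ≤ #G.edgeFinset :=
  card_filter_le _ _

theorem veDeg_eq_card_edgeFinset_iff {v : V} :
    veDeg G v = #G.edgeFinset ↔
      ∀ e ∈ G.edgeSet, ∃ u ∈ insert v (G.neighborFinset v), u ∈ e := by
  simp only [veDeg, card_filter_eq_iff, mem_edgeFinset]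

theorem veMu_le_card_edgeFinset_pow_three (G : SimpleGraph V) :
    veMu G ≤ #G.edgeFinset ^ 3 := by
  calc veMu G ≤ ∑ _e ∈ G.edgeFinset, #G.edgeFinset * #G.edgeFinset := by
        refine sum_le_sum fun e _ ↦ ?_
        induction e using Sym2.ind with
        | _ a b =>
          exact Nat.mul_le_mul (veDeg_le_card_edgeFinset G a) (veDeg_le_card_edgeFinset G b)
    _ = #G.edgeFinset ^ 3 := by rw [sum_const, smul_eq_mul]; ring

theorem veMu_eq_card_edgeFinset_pow_three_iff :
    veMu G = #G.edgeFinset ^ 3 ↔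
      ∀ a b, G.Adj a b → veDeg G a = #G.edgeFinset ∧ veDeg G b = #G.edgeFinset := by
  have hle := veDeg_le_card_edgeFinset G
  have hbound : #G.edgeFinset ^ 3 = ∑ _e ∈ G.edgeFinset, #G.edgeFinset * #G.edgeFinset := by
    rw [sum_const, smul_eq_mul]; ring
  rw [veMu, hbound, sum_eq_sum_iff_of_le]
  · simp only [Sym2.forall, mem_edgeFinset, mem_edgeSet, Sym2.lift_mk,
      Nat.mul_eq_mul_self_iff_of_le (hle _) (hle _)]
  · simp only [Sym2.forall, mem_edgeFinset, mem_edgeSet, Sym2.lift_mk]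
    exact fun a b _ ↦ Nat.mul_le_mul (hle a) (hle b)

end VeDegree

section CommonVertex

variable {V : Type*} {G : SimpleGraph V} {c : V}

theorem SimpleGraph.Adj.eq_of_forall_mem_edgeSet (hc : ∀ e ∈ G.edgeSet, c ∈ e) {v w : V}
    (h : G.Adj v w) (hv : v ≠ c) : w = c := by
  have hcvw : c ∈ s(v, w) := hc _ h
  rw [Sym2.mem_iff] at hcvw
  exact (hcvw.resolve_left hv.symm).symm

theorem SimpleGraph.eq_starGraph_of_forall_mem_edgeSet (hG : G.Preconnected)
    (hc : ∀ e ∈ G.edgeSet, c ∈ e) : G = SimpleGraph.starGraph c := by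
  have hadj : ∀ v, v ≠ c → G.Adj v c := fun v hv ↦ by
    obtain ⟨w, hw⟩ := (hG v c).nonempty_neighborSet_left hv
    exact hw.eq_of_forall_mem_edgeSet hc hv ▸ hw
  ext a b
  rw [SimpleGraph.starGraph_adj]
  refine ⟨fun h ↦ ⟨h.ne, ?_⟩, ?_⟩
  · by_contra! hab
    exact hab.2 (h.eq_of_forall_mem_edgeSet hc hab.1)
  · rintro ⟨hab, rfl | rfl⟩
    · exact (hadj b hab.symm).symm
    · exact hadj a hab

variable [Fintype V]

theorem veMu_eq_card_edgeFinset_pow_three_of_forall_mem_edgeSet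
    (hc : ∀ e ∈ G.edgeSet, c ∈ e) :
    veMu G = #G.edgeFinset ^ 3 := by
  have hveDeg : ∀ v w, G.Adj v w → veDeg G v = #G.edgeFinset := fun v w hvw ↦ by
    refine veDeg_eq_card_edgeFinset_iff.2 fun e he ↦ ⟨c, ?_, hc e he⟩
    rcases eq_or_ne v c with rfl | hv
    · exact mem_insert_self _ _
    · have hvc : G.Adj v c := hvw.eq_of_forall_mem_edgeSet hc hv ▸ hvw
      exact mem_insert_of_mem ((mem_neighborFinset _ _ _).2 hvc)
  exact veMu_eq_card_edgeFinset_pow_three_iff.2 fun a b hab ↦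
    ⟨hveDeg a b hab, hveDeg b a hab.symm⟩

theorem forall_mem_edgeSet_of_veMu_eq {v p : V} (hv : G.neighborFinset v = {p})
    (h : veMu G = #G.edgeFinset ^ 3) : ∀ e ∈ G.edgeSet, p ∈ e := by
  have hvp : G.Adj v p := by simp [← mem_neighborFinset, hv]
  have hveDeg := (veMu_eq_card_edgeFinset_pow_three_iff.1 h v p hvp).1
  intro e he
  obtain ⟨u, hu, hue⟩ := veDeg_eq_card_edgeFinset_iff.1 hveDeg e he
  rw [hv, mem_insert, mem_singleton] at hu
  rcases hu with rfl | rfl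
  · obtain ⟨w, rfl⟩ := Sym2.mem_iff_exists.1 hue
    have hw : w ∈ G.neighborFinset u := (mem_neighborFinset _ _ _).2 he
    rw [hv, mem_singleton] at hw
    exact hw ▸ Sym2.mem_mk_right u w
  · exact hue

end CommonVertex

theorem SimpleGraph.IsTree.veMu_eq_card_edgeFinset_pow_three_iff {V : Type*} [Fintype V]
    {G : SimpleGraph V} (hT : G.IsTree) :
    veMu G = #G.edgeFinset ^ 3 ↔ ∃ c, G = SimpleGraph.starGraph c := by
  refine ⟨fun h ↦ ?_, ?_⟩
  · rcases subsingleton_or_nontrivial V with hV | hV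
    · obtain ⟨c⟩ := hT.connected.nonempty
      exact ⟨c, by ext a b; simp [Subsingleton.elim a b]⟩
    · obtain ⟨v, hv⟩ := hT.exists_vert_degree_one_of_nontrivial
      obtain ⟨p, hp⟩ := card_eq_one.1 ((G.card_neighborFinset_eq_degree v).trans hv)
      exact ⟨p, eq_starGraph_of_forall_mem_edgeSet hT.connected.preconnected
        (forall_mem_edgeSet_of_veMu_eq hp h)⟩
  · rintro ⟨c, rfl⟩
    refine veMu_eq_card_edgeFinset_pow_three_of_forall_mem_edgeSet (c := c) fun e he ↦ ?_
    induction e using Sym2.ind with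
    | _ a b =>
      rw [mem_edgeSet, SimpleGraph.starGraph_adj] at he
      exact Sym2.mem_iff.2 (he.2.imp Eq.symm Eq.symm)

section StarIso

variable {V W : Type*}

theorem SimpleGraph.eq_starGraph_of_iso_starGraph {G : SimpleGraph V} {c : W}
    (φ : G ≃g SimpleGraph.starGraph c) : G = SimpleGraph.starGraph (φ.symm c) := by
  ext a b
  rw [← φ.map_adj_iff]
  simp only [SimpleGraph.starGraph_adj, φ.injective.ne_iff, RelIso.eq_symm_apply]

theorem SimpleGraph.nonempty_iso_starGraph [Fintype V] [Fintype W] (c : V) (d : W)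
    (h : Fintype.card V = Fintype.card W) :
    Nonempty (SimpleGraph.starGraph c ≃g SimpleGraph.starGraph d) := by
  obtain ⟨e⟩ := Fintype.card_eq.1 h
  let e' := e.trans (Equiv.swap (e c) d)
  have hc : e' c = d := by simp [e']
  refine ⟨⟨e', fun {a b} ↦ ?_⟩⟩
  simp only [SimpleGraph.starGraph_adj, ← hc, e'.injective.ne_iff, e'.injective.eq_iff]

theorem starGraph_eq_starGraph_zero (n : ℕ) (hn : 0 < n) :
    _root_.starGraph n = SimpleGraph.starGraph (⟨0, hn⟩ : Fin n) := by
  ext a b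
  simp [_root_.starGraph, Fin.ext_iff]

end StarIso

theorem veMu_tree_upper_bound_general {V : Type*} [Fintype V] (G : SimpleGraph V) (n : ℕ)
    (hcard : Fintype.card V = n) (hT : G.IsTree) :
    veMu G ≤ (n - 1) ^ 3 ∧
      (veMu G = (n - 1) ^ 3 ↔ Nonempty (G ≃g _root_.starGraph n)) := by
  have hE : #G.edgeFinset = n - 1 := by have := hT.card_edgeFinset; omega
  have hn : 0 < n := hcard ▸ Fintype.card_pos_iff.2 hT.connected.nonempty
  refine ⟨hE ▸ veMu_le_card_edgeFinset_pow_three G, ?_⟩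
  rw [← hE, hT.veMu_eq_card_edgeFinset_pow_three_iff, starGraph_eq_starGraph_zero n hn]
  constructor
  · rintro ⟨c, rfl⟩
    exact nonempty_iso_starGraph c _ (by simp [hcard])
  · rintro ⟨φ⟩
    exact ⟨_, eq_starGraph_of_iso_starGraph φ⟩

theorem veMu_tree_upper_bound {V : Type*} [Fintype V] (G : SimpleGraph V) (n : ℕ)
    (hn : 5 ≤ n) (hcard : Fintype.card V = n) (hT : G.IsTree) :
    veMu G ≤ (n - 1) ^ 3 ∧
      (veMu G = (n - 1) ^ 3 ↔ Nonempty (G ≃g _root_.starGraph n)) :=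
  veMu_tree_upper_bound_general G n hcard hT
end
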